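/- arXiv:2406.19810 — 7 statements merged into one kernel-verified Lean document; each statement's English description precedes it below -/
import Mathlib

section
/- Let B ⊆ [0,1] be a Bernstein set equipped with the trace σ-algebra 𝓕 = {A ∩ B : A Borel in [0,1]}. Then the assignment P(A ∩ B) := λ(A) (λ = Lebesgue measure) is well-defined, i.e. if A ∩ B = A' ∩ B for Borel sets A, A', then λ(A) = λ(A'), and P defines a probability measure on (B, 𝓕). -/
/-!
Every measurable set `S ⊆ [0,1]` missing `B` is null: otherwise inner regularity gives a compact
`K ⊆ S` of positive measure, which is uncountable and hence meets `B`. So `B` has full outer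
measure in `[0,1]`, i.e. `volume.restrict B = volume.restrict [0,1]`, which is the well-definedness.
For any set `s`, the outer measure `t ↦ μ (Subtype.val '' t)` on the subtype `s` makes every trace set
Carathéodory measurable, so it is a measure there with value `μ (A ∩ s)` on `A ∩ s`.
-/

open MeasureTheory Set

namespace MeasureTheory

theorem OuterMeasure.comap_caratheodory_le {α β : Type*} (f : α → β) (m : OuterMeasure β) :
    m.caratheodory.comap f ≤ (m.comap f).caratheodory := by
  rintro _ ⟨s, hs, rfl⟩
  refine (OuterMeasure.isCaratheodory_iff _).2 fun t => ?_
  simp only [OuterMeasure.comap_apply, image_inter_preimage, image_sdiff_preimage]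
  exact (OuterMeasure.isCaratheodory_iff _).1 hs _

namespace Measure

variable {α : Type*} [MeasurableSpace α]

/-- Unlike `Measure.comap Subtype.val μ`, this does not vanish when `s` is not null-measurable. -/
noncomputable def trace (μ : Measure α) (s : Set α) : Measure s :=
  (μ.toOuterMeasure.comap Subtype.val).toMeasure <|
    (MeasurableSpace.comap_mono (le_toOuterMeasure_caratheodory μ)).trans
      (OuterMeasure.comap_caratheodory_le _ _)

theorem trace_apply_preimage (μ : Measure α) (s : Set α) {A : Set α} (hA : MeasurableSet A) :
    μ.trace s (Subtype.val ⁻¹' A) = μ.restrict s A := by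
  rw [trace, toMeasure_apply _ _ (measurable_subtype_coe hA),
    OuterMeasure.comap_apply, Subtype.image_preimage_coe, restrict_apply hA, inter_comm]
  rfl

theorem restrict_eq_restrict_of_forall_disjoint_null {μ : Measure α} {s t : Set α} (hst : s ⊆ t)
    (ht : MeasurableSet t) (h : ∀ S, MeasurableSet S → S ⊆ t → Disjoint S s → μ S = 0) :
    μ.restrict s = μ.restrict t := by
  refine le_antisymm (restrict_mono hst le_rfl) (le_iff.2 fun A hA => ?_)
  rw [restrict_apply hA, restrict_apply hA]
  set U := toMeasurable μ (A ∩ s)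
  have hnull : μ ((A ∩ t) \ U) = 0 := by
    refine h _ ((hA.inter ht).diff (measurableSet_toMeasurable _ _)) (fun x hx => hx.1.2) ?_
    exact disjoint_left.2 fun x hx hxs => hx.2 (subset_toMeasurable _ _ ⟨hx.1.1, hxs⟩)
  calc μ (A ∩ t) ≤ μ ((A ∩ t) ∩ U) + μ ((A ∩ t) \ U) := measure_le_inter_add_sdiff _ _ _
    _ ≤ μ (A ∩ s) := by
      rw [hnull, add_zero, ← measure_toMeasurable (A ∩ s)]
      exact measure_mono inter_subset_right

end Measure

theorem measure_eq_zero_of_forall_isCompact_inter_nonempty {α : Type*} [MeasurableSpace α]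
    [TopologicalSpace α] {μ : Measure α} [μ.InnerRegular] [NullSingletonClass μ] {S B : Set α}
    (hS : MeasurableSet S) (hSB : Disjoint S B)
    (hB : ∀ K ⊆ S, IsCompact K → ¬ K.Countable → (B ∩ K).Nonempty) : μ S = 0 := by
  by_contra h
  obtain ⟨K, hKS, hK, hμK⟩ := hS.exists_lt_isCompact (pos_iff_ne_zero.2 h)
  obtain ⟨x, hxB, hxK⟩ := hB K hKS hK fun hc => hμK.ne' (hc.measure_zero μ)
  exact hSB.ne_of_mem (hKS hxK) hxB rfl

end MeasureTheory

/-- For a Bernstein set `B ⊆ [0,1]` with the trace σ-algebra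
`𝓕 = {A ∩ B : A Borel}`, the assignment `P(A ∩ B) := λ(A)` is well-defined
(if `A ∩ B = A' ∩ B` for Borel `A, A'` then `λ(A) = λ(A')`) and defines a
probability measure on `(B, 𝓕)`. Here the subtype `↥B` carries the trace σ-algebra. -/
theorem stmt_1 (B : Set ℝ) (hB : B ⊆ Set.Icc 0 1)
    (hBern : ∀ C : Set ℝ, C ⊆ Set.Icc 0 1 → IsClosed C → ¬ C.Countable →
      (B ∩ C).Nonempty ∧ (Bᶜ ∩ C).Nonempty) :
    (∀ A A' : Set ℝ, MeasurableSet A → MeasurableSet A' → A ∩ B = A' ∩ B →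
      volume.restrict (Set.Icc 0 1) A = volume.restrict (Set.Icc 0 1) A') ∧
    ∃ P : Measure B, IsProbabilityMeasure P ∧
      ∀ A : Set ℝ, MeasurableSet A →
        P (Subtype.val ⁻¹' A) = volume.restrict (Set.Icc 0 1) A := by
  have hnull : ∀ S, MeasurableSet S → S ⊆ Icc 0 1 → Disjoint S B → volume S = 0 :=
    fun S hS hSI hSB => measure_eq_zero_of_forall_isCompact_inter_nonempty hS hSB
      fun K hKS hK hKc => (hBern K (hKS.trans hSI) hK.isClosed hKc).1
  have hrestrict : volume.restrict B = volume.restrict (Icc 0 1) :=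
    Measure.restrict_eq_restrict_of_forall_disjoint_null hB measurableSet_Icc hnull
  refine ⟨fun A A' hA hA' hAA' => ?_, volume.trace B, ⟨?_⟩, fun A hA => ?_⟩
  · rw [← hrestrict, Measure.restrict_apply hA, Measure.restrict_apply hA', hAA']
  · rw [← preimage_univ, Measure.trace_apply_preimage _ _ MeasurableSet.univ, hrestrict,
      Measure.restrict_apply_univ, Real.volume_Icc, sub_zero, ENNReal.ofReal_one]
  · rw [Measure.trace_apply_preimage _ _ hA, hrestrict]
end

section
/- There is no probability measure Q on (B × Bᶜ) with the trace Borel product σ-algebra, where B ⊆ [0,1] is a Bernstein set, such that Q((A¹ ∩ B) × (A² ∩ Bᶜ)) = λ(A¹ ∩ A²) for all Borel sets A¹, A² ⊆ [0,1]. -/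
/-!
Under `Q` the two coordinates of a typical point coincide: for disjoint Borel sets `A₁, A₂`
the prescribed mass of `{x ∈ A₁, y ∈ A₂}` is `λ(A₁ ∩ A₂) = 0`, and separating `x ≠ y` by a
rational `q` (taking `A₁ = Iio q`, `A₂ = Ioi q` or the reverse) covers `{x ≠ y}` by countably
many such null sets. But `x ∈ B` and `y ∈ Bᶜ` are never equal.
-/

open MeasureTheory Set

theorem ae_eq_of_forall_measure_disjoint_eq_zero {α : Type*} [MeasurableSpace α]
    {μ : Measure α} {f g : α → ℝ}
    (h : ∀ A₁ A₂ : Set ℝ, MeasurableSet A₁ → MeasurableSet A₂ → Disjoint A₁ A₂ →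
      μ {a | f a ∈ A₁ ∧ g a ∈ A₂} = 0) :
    f =ᵐ[μ] g := by
  have h_sep : ∀ q : ℚ, ∀ᵐ a ∂μ, ¬ (f a < q ∧ q < g a) ∧ ¬ (g a < q ∧ q < f a) := by
    intro q
    have hlt := h (Iio q) (Ioi q) measurableSet_Iio measurableSet_Ioi Iio_disjoint_Ioi_same
    have hgt := h (Ioi q) (Iio q) measurableSet_Ioi measurableSet_Iio Ioi_disjoint_Iio_same
    filter_upwards [measure_eq_zero_iff_ae_notMem.1 hlt, measure_eq_zero_iff_ae_notMem.1 hgt]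
      with a hlt hgt
    exact ⟨hlt, fun h' => hgt ⟨h'.2, h'.1⟩⟩
  filter_upwards [ae_all_iff.2 h_sep] with a ha
  by_contra hne
  rcases lt_or_gt_of_ne hne with hfg | hgf
  · obtain ⟨q, hfq, hqg⟩ := exists_rat_btwn hfg
    exact (ha q).1 ⟨hfq, hqg⟩
  · obtain ⟨q, hgq, hqf⟩ := exists_rat_btwn hgf
    exact (ha q).2 ⟨hgq, hqf⟩

theorem stmt_2_general (B : Set ℝ) :
    ¬ ∃ Q : Measure (↥B × ↥(Bᶜ)), IsProbabilityMeasure Q ∧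
      ∀ A₁ A₂ : Set ℝ, MeasurableSet A₁ → MeasurableSet A₂ →
        A₁ ⊆ Set.Icc 0 1 → A₂ ⊆ Set.Icc 0 1 →
        Q {p : ↥B × ↥(Bᶜ) | (p.1 : ℝ) ∈ A₁ ∧ (p.2 : ℝ) ∈ A₂} = volume (A₁ ∩ A₂) := by
  rintro ⟨Q, hQ, hspec⟩
  have h_supp : ∀ᵐ p ∂Q, (p.1 : ℝ) ∈ Icc 0 1 ∧ (p.2 : ℝ) ∈ Icc 0 1 := by
    have h_meas : MeasurableSet {p : ↥B × ↥(Bᶜ) | (p.1 : ℝ) ∈ Icc 0 1 ∧ (p.2 : ℝ) ∈ Icc 0 1} :=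
      (measurableSet_Icc.preimage (by fun_prop)).inter (measurableSet_Icc.preimage (by fun_prop))
    rw [ae_iff_measure_eq h_meas.nullMeasurableSet, hspec _ _ measurableSet_Icc measurableSet_Icc
      subset_rfl subset_rfl, inter_self, Real.volume_Icc, measure_univ]
    simp
  have h_disj : ∀ A₁ A₂ : Set ℝ, MeasurableSet A₁ → MeasurableSet A₂ → Disjoint A₁ A₂ →
      Q {p | (p.1 : ℝ) ∈ A₁ ∧ (p.2 : ℝ) ∈ A₂} = 0 := by
    intro A₁ A₂ h₁ h₂ hd
    calc Q {p | (p.1 : ℝ) ∈ A₁ ∧ (p.2 : ℝ) ∈ A₂}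
        = Q {p | (p.1 : ℝ) ∈ A₁ ∩ Icc 0 1 ∧ (p.2 : ℝ) ∈ A₂ ∩ Icc 0 1} :=
          measure_congr <| Filter.eventuallyEq_set.2 <| h_supp.mono fun p hp => by
            simp only [mem_ofPred_eq, mem_inter_iff, hp.1, hp.2, and_true]
      _ = volume ((A₁ ∩ Icc 0 1) ∩ (A₂ ∩ Icc 0 1)) :=
          hspec _ _ (h₁.inter measurableSet_Icc) (h₂.inter measurableSet_Icc)
            inter_subset_right inter_subset_right
      _ = 0 := by
          rw [(hd.mono inter_subset_left inter_subset_left).inter_eq, measure_empty]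
  obtain ⟨p, hp⟩ := (ae_eq_of_forall_measure_disjoint_eq_zero h_disj).exists
  have h_eq : (p.1 : ℝ) = p.2 := hp
  exact p.2.2 (h_eq ▸ p.1.2)

/-- For a Bernstein set `B ⊆ [0,1]` there is no probability measure `Q`
on `B × Bᶜ` (with the product of the trace Borel σ-algebras) such that
`Q((A¹ ∩ B) × (A² ∩ Bᶜ)) = λ(A¹ ∩ A²)` for all Borel sets `A¹, A² ⊆ [0,1]`. -/
theorem stmt_2 (B : Set ℝ) (hB : B ⊆ Set.Icc 0 1)
    (hBern : ∀ C : Set ℝ, C ⊆ Set.Icc 0 1 → IsClosed C → ¬ C.Countable →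
      (B ∩ C).Nonempty ∧ (Bᶜ ∩ C).Nonempty) :
    ¬ ∃ Q : Measure (↥B × ↥(Bᶜ)), IsProbabilityMeasure Q ∧
      ∀ A₁ A₂ : Set ℝ, MeasurableSet A₁ → MeasurableSet A₂ →
        A₁ ⊆ Set.Icc 0 1 → A₂ ⊆ Set.Icc 0 1 →
        Q {p : ↥B × ↥(Bᶜ) | (p.1 : ℝ) ∈ A₁ ∧ (p.2 : ℝ) ∈ A₂} = volume (A₁ ∩ A₂) :=
  stmt_2_general B
end

section
/- For a Polish space S, the map Φ : 𝒫(C) × [0,1] → C, where C ⊆ [0,1] is the Cantor set and Φ(μ, u) = sup { x ∈ [0,1] : μ([0,x) ∩ C) ≤ u } is the quantile function of μ, is jointly Borel measurable in (μ, u). -/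
/-!
The cumulative distribution function `F_μ(t) = μ(C ∩ [0, t))` is lower semicontinuous in `μ`
(portmanteau, as `C ∩ [0, t)` is open in `C`) and left-continuous in `t`. Left-continuity gives
`t ≤ Φ(μ, u) ↔ F_μ(t) ≤ u` for `t ≤ 1`, so each superlevel set `{Φ ≥ t}` is the measurable
set `{(μ, u) | F_μ(t) ≤ u}`. If `Φ(μ, u)` lay in a gap `(l, r)` of the closed set `C`, then
`F_μ(r) = F_μ(Φ(μ, u)) ≤ u` would force `r ≤ Φ(μ, u)`.
-/

open MeasureTheory

noncomputable section

/-- The quantile function of a measure `μ` on the Cantor set `C = cantorSet`: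
`Φ(μ, u) = sup { x ∈ [0,1] : μ([0,x) ∩ C) ≤ u }`. -/
def cantorQuantile (μ : Measure ↥cantorSet) (u : ℝ) : ℝ :=
  sSup {x | x ∈ Set.Icc (0 : ℝ) 1 ∧
    μ (Subtype.val ⁻¹' Set.Ico (0 : ℝ) x) ≤ ENNReal.ofReal u}

/-- Borel σ-algebra of the weak topology on `𝒫(C)`. -/
instance : MeasurableSpace (ProbabilityMeasure ↥cantorSet) := borel _

open Set Filter
open scoped ENNReal

instance : BorelSpace (ProbabilityMeasure ↥cantorSet) := ⟨rfl⟩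

lemma one_mem_preCantorSet (n : ℕ) : (1 : ℝ) ∈ preCantorSet n := by
  induction n with
  | zero => simp [preCantorSet]
  | succ n ih => exact Or.inr ⟨1, ih, by norm_num⟩

lemma one_mem_cantorSet : (1 : ℝ) ∈ cantorSet :=
  mem_iInter.mpr one_mem_preCantorSet

lemma ProbabilityMeasure.lowerSemicontinuous_measure_of_isOpen {Ω : Type*}
    [MeasurableSpace Ω] [TopologicalSpace Ω] [OpensMeasurableSpace Ω] [HasOuterApproxClosed Ω]
    {G : Set Ω} (hG : IsOpen G) :
    LowerSemicontinuous fun μ : ProbabilityMeasure Ω => (μ : Measure Ω) G :=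
  lowerSemicontinuous_iff_le_liminf.2 fun _ =>
    ProbabilityMeasure.le_liminf_measure_open_of_tendsto tendsto_id hG

lemma measure_preimage_Iio_csSup_le {α : Type*} [MeasurableSpace α] (μ : Measure α)
    (f : α → ℝ) {S : Set ℝ} (hne : S.Nonempty) (hbdd : BddAbove S) {c : ℝ≥0∞}
    (h : ∀ x ∈ S, μ (f ⁻¹' Iio x) ≤ c) : μ (f ⁻¹' Iio (sSup S)) ≤ c := by
  obtain ⟨x, hmono, htend, hxS⟩ := exists_seq_tendsto_sSup hne hbdd
  have hmono' : Monotone fun n => f ⁻¹' Iio (x n) :=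
    fun _ _ hmn => preimage_mono (Iio_subset_Iio (hmono hmn))
  rw [← (isLUB_of_tendsto_atTop hmono htend).iUnion_Iio_eq, preimage_iUnion,
    hmono'.measure_iUnion]
  exact iSup_le fun n => h _ (hxS n)

def cantorCdf (μ : Measure ↥cantorSet) (t : ℝ) : ℝ≥0∞ :=
  μ (Subtype.val ⁻¹' Iio t)

lemma monotone_cantorCdf (μ : Measure ↥cantorSet) : Monotone (cantorCdf μ) :=
  fun _ _ hst => measure_mono (preimage_mono (Iio_subset_Iio hst))

lemma cantorCdf_zero (μ : Measure ↥cantorSet) : cantorCdf μ 0 = 0 := by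
  have hempty : (Subtype.val ⁻¹' Iio 0 : Set ↥cantorSet) = ∅ :=
    eq_empty_of_forall_notMem fun c hc => not_lt.2 (cantorSet_subset_unitInterval c.2).1 hc
  rw [cantorCdf, hempty, measure_empty]

lemma measurable_cantorCdf (t : ℝ) :
    Measurable fun μ : ProbabilityMeasure ↥cantorSet => cantorCdf μ t :=
  (ProbabilityMeasure.lowerSemicontinuous_measure_of_isOpen
    (isOpen_Iio.preimage continuous_subtype_val)).measurable

lemma cantorCdf_eq_of_Ico_subset_compl (μ : Measure ↥cantorSet) {a b : ℝ} (hab : a ≤ b)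
    (hgap : Ico a b ⊆ cantorSetᶜ) : cantorCdf μ b = cantorCdf μ a := by
  refine congrArg μ (ext fun c => ⟨fun hcb => ?_, fun hca => lt_of_lt_of_le hca hab⟩)
  by_contra hca
  exact hgap ⟨not_lt.1 hca, hcb⟩ c.2

section cantorQuantile

variable (μ : Measure ↥cantorSet) (u : ℝ)

lemma cantorQuantile_eq_sSup :
    cantorQuantile μ u = sSup {x ∈ Icc 0 1 | cantorCdf μ x ≤ ENNReal.ofReal u} := by
  have hIco : ∀ t : ℝ, (Subtype.val ⁻¹' Ico 0 t : Set ↥cantorSet) = Subtype.val ⁻¹' Iio t :=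
    fun t => ext fun c => and_iff_right (cantorSet_subset_unitInterval c.2).1
  simp only [cantorQuantile, cantorCdf, hIco]

lemma cantorQuantile_nonneg : 0 ≤ cantorQuantile μ u := by
  rw [cantorQuantile_eq_sSup]
  exact le_csSup ⟨1, fun _ hx => hx.1.2⟩
    ⟨left_mem_Icc.2 zero_le_one, (cantorCdf_zero μ).trans_le zero_le⟩

lemma cantorQuantile_le_one : cantorQuantile μ u ≤ 1 := by
  rw [cantorQuantile_eq_sSup]
  exact csSup_le ⟨0, left_mem_Icc.2 zero_le_one, (cantorCdf_zero μ).trans_le zero_le⟩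
    fun _ hx => hx.1.2

lemma cantorCdf_cantorQuantile_le : cantorCdf μ (cantorQuantile μ u) ≤ ENNReal.ofReal u := by
  rw [cantorQuantile_eq_sSup]
  refine measure_preimage_Iio_csSup_le μ Subtype.val ?_ ⟨1, fun _ hx => hx.1.2⟩ fun _ hx => hx.2
  exact ⟨0, left_mem_Icc.2 zero_le_one, (cantorCdf_zero μ).trans_le zero_le⟩

lemma le_cantorQuantile_iff {t : ℝ} (ht : t ≤ 1) :
    t ≤ cantorQuantile μ u ↔ cantorCdf μ t ≤ ENNReal.ofReal u := by
  refine ⟨fun h => (monotone_cantorCdf μ h).trans (cantorCdf_cantorQuantile_le μ u), fun h => ?_⟩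
  rcases le_or_gt t 0 with h0 | h0
  · exact h0.trans (cantorQuantile_nonneg μ u)
  · rw [cantorQuantile_eq_sSup]
    exact le_csSup ⟨1, fun _ hx => hx.1.2⟩ ⟨⟨h0.le, ht⟩, h⟩

lemma cantorQuantile_mem_cantorSet : cantorQuantile μ u ∈ cantorSet := by
  set Q := cantorQuantile μ u
  by_contra hQ
  obtain ⟨l, r, ⟨hlQ, hQr⟩, hgap⟩ :=
    mem_nhds_iff_exists_Ioo_subset.1 (isClosed_cantorSet.isOpen_compl.mem_nhds hQ)
  have hr1 : r ≤ 1 := not_lt.1 fun h1 =>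
    hgap ⟨hlQ.trans_le (cantorQuantile_le_one μ u), h1⟩ one_mem_cantorSet
  have hFr : cantorCdf μ r = cantorCdf μ Q :=
    cantorCdf_eq_of_Ico_subset_compl μ hQr.le ((Ico_subset_Ioo_left hlQ).trans hgap)
  exact hQr.not_ge ((le_cantorQuantile_iff μ u hr1).2 (hFr ▸ cantorCdf_cantorQuantile_le μ u))

end cantorQuantile

lemma measurable_cantorQuantile :
    Measurable fun p : ProbabilityMeasure ↥cantorSet × Icc (0 : ℝ) 1 =>
      cantorQuantile (p.1 : Measure ↥cantorSet) (p.2 : ℝ) := by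
  refine measurable_of_Ici fun t => ?_
  rcases le_or_gt t 1 with ht | ht
  · have hpre : (fun p : ProbabilityMeasure ↥cantorSet × Icc (0 : ℝ) 1 =>
        cantorQuantile (p.1 : Measure ↥cantorSet) (p.2 : ℝ)) ⁻¹' Ici t =
        {p | cantorCdf p.1 t ≤ ENNReal.ofReal p.2} :=
      ext fun p => le_cantorQuantile_iff _ _ ht
    rw [hpre]
    exact measurableSet_le ((measurable_cantorCdf t).comp measurable_fst)
      (ENNReal.measurable_ofReal.comp (measurable_subtype_coe.comp measurable_snd))
  · convert MeasurableSet.empty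
    exact eq_empty_of_forall_notMem fun p hp => (cantorQuantile_le_one _ _).not_gt (ht.trans_le hp)

/-- The quantile map `Φ : 𝒫(C) × [0,1] → C` is jointly Borel measurable
(in particular it takes values in the Cantor set `C`). -/
theorem stmt_3 :
    (Measurable fun p : ProbabilityMeasure ↥cantorSet × Set.Icc (0 : ℝ) 1 =>
      cantorQuantile (p.1 : Measure ↥cantorSet) (p.2 : ℝ)) ∧
    ∀ (μ : ProbabilityMeasure ↥cantorSet) (u : Set.Icc (0 : ℝ) 1),
      cantorQuantile (μ : Measure ↥cantorSet) (u : ℝ) ∈ cantorSet :=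
  ⟨measurable_cantorQuantile, fun μ u => cantorQuantile_mem_cantorSet μ u⟩

end
end

section
/- Let π be a bicausal coupling between filtered processes 𝕏 and 𝕐, and let X̌ be a self-aware lift of 𝕏 defined on Ω^𝕏. Regarding X̌ as a process on the product space (Ω^𝕏 × Ω^𝕐, 𝓕^𝕏 ⊗ 𝓕^𝕐, π) with the product filtration (𝓕^𝕏_t ⊗ 𝓕^𝕐_t), X̌ is again self-aware: L_π(X̌ | 𝓕^𝕏_t ⊗ 𝓕^𝕐_t) = L_π(X̌ | X̌_{1:t}) for all t. -/
open MeasureTheory ProbabilityTheory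

/-- The σ-algebra `σ(Y_{1:t})` generated by the process `Y` up to time `t`. -/
def pathSigma {Ω E : Type*} {N : ℕ} [MeasurableSpace E] (Y : Fin N → Ω → E) (t : Fin N) :
    MeasurableSpace Ω :=
  ⨆ i : Fin N, ⨆ _ : i ≤ t, MeasurableSpace.comap (Y i) inferInstance

/-- A process `Y` adapted to a filtration `ℱ` is *self-aware* if the conditional law of the
whole path given `ℱ t` coincides with the conditional law given `Y_{1:t}`, for every `t`;
expressed via conditional expectations of indicators of path events. -/
def SelfAware {Ω E : Type*} {N : ℕ} [mΩ : MeasurableSpace Ω] [MeasurableSpace E]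
    (μ : Measure Ω) (ℱ : Fin N → MeasurableSpace Ω) (Y : Fin N → Ω → E) : Prop :=
  ∀ t : Fin N, ∀ s : Set (Fin N → E), MeasurableSet s →
    μ[Set.indicator ((fun ω i => Y i ω) ⁻¹' s) (fun _ => (1 : ℝ)) | ℱ t]
      =ᵐ[μ] μ[Set.indicator ((fun ω i => Y i ω) ⁻¹' s) (fun _ => (1 : ℝ)) | pathSigma Y t]

/-- Elementary conditional independence of two σ-algebras `mA, mB` given `mC` under `μ`:
`E[1_A 1_B | mC] = E[1_A | mC] · E[1_B | mC]` a.s. for all `A ∈ mA`, `B ∈ mB`. -/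
def CondIndepC {Ω : Type*} [mΩ : MeasurableSpace Ω] (μ : Measure Ω)
    (mA mB mC : MeasurableSpace Ω) : Prop :=
  ∀ A : Set Ω, MeasurableSet[mA] A → ∀ B : Set Ω, MeasurableSet[mB] B →
    μ[Set.indicator (A ∩ B) (fun _ => (1 : ℝ)) | mC]
      =ᵐ[μ] μ[Set.indicator A (fun _ => (1 : ℝ)) | mC] *
            μ[Set.indicator B (fun _ => (1 : ℝ)) | mC]

/-!
Causality of `π` from `𝕏` to `𝕐` makes the whole path of `𝕏` conditionally independent of
`𝒢 t` given `ℱ t`, so conditioning an event of the `𝕏`-path on `ℱ t ⊗ 𝒢 t` is the same as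
conditioning it on `ℱ t` alone (it suffices to compare integrals over the rectangles `C ∩ B`,
where the product rule for conditional expectations applies). As the first marginal of `π` is
`P₁`, this conditional expectation is the pullback of the one computed on `Ω₁`, and there
self-awareness replaces `ℱ t` by `σ(X̌_{1:t})`.
-/

open Set MeasurableSpace

theorem isPiSystem_image2_inter {α : Type*} {C D : Set (Set α)} (hC : IsPiSystem C)
    (hD : IsPiSystem D) : IsPiSystem (image2 (· ∩ ·) C D) := by
  rintro _ ⟨s₁, hs₁, t₁, ht₁, rfl⟩ _ ⟨s₂, hs₂, t₂, ht₂, rfl⟩ hne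
  rw [inter_inter_inter_comm] at hne ⊢
  exact mem_image2_of_mem (hC _ hs₁ _ hs₂ (hne.mono inter_subset_left))
    (hD _ ht₁ _ ht₂ (hne.mono inter_subset_right))

theorem generateFrom_image2_inter {α : Type*} (m₁ m₂ : MeasurableSpace α) :
    generateFrom (image2 (· ∩ ·) {s | MeasurableSet[m₁] s} {s | MeasurableSet[m₂] s}) =
      m₁ ⊔ m₂ := by
  refine le_antisymm (generateFrom_le ?_) (sup_le (fun s hs => ?_) fun s hs => ?_)
  · rintro _ ⟨s, hs, t, ht, rfl⟩
    exact (le_sup_left (b := m₂) s hs).inter (le_sup_right (a := m₁) t ht)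
  · exact measurableSet_generateFrom ⟨s, hs, univ, .univ, inter_univ s⟩
  · exact measurableSet_generateFrom ⟨univ, .univ, s, hs, univ_inter s⟩

theorem setIntegral_eq_of_isPiSystem {Ω : Type*} {m mΩ : MeasurableSpace Ω} {μ : Measure Ω}
    {f g : Ω → ℝ} {p : Set (Set Ω)} (hm : m ≤ mΩ) (hgen : m = generateFrom p)
    (hp : IsPiSystem p) (huniv : univ ∈ p) (hf : Integrable f μ) (hg : Integrable g μ)
    (hfg : ∀ s ∈ p, ∫ x in s, f x ∂μ = ∫ x in s, g x ∂μ) {s : Set Ω}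
    (hs : MeasurableSet[m] s) : ∫ x in s, f x ∂μ = ∫ x in s, g x ∂μ := by
  induction s, hs using induction_on_inter hgen hp with
  | empty => simp
  | basic s hs => exact hfg s hs
  | compl s hs ih =>
    have htot := hfg univ huniv
    rw [setIntegral_univ, setIntegral_univ] at htot
    rw [setIntegral_compl (hm s hs) hf, setIntegral_compl (hm s hs) hg, ih, htot]
  | iUnion s hdisj hs ih =>
    rw [integral_iUnion (fun i => hm _ (hs i)) hdisj hf.integrableOn,
      integral_iUnion (fun i => hm _ (hs i)) hdisj hg.integrableOn]
    exact tsum_congr ih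

section CondIndepC

variable {Ω : Type*} {mA mB mC mΩ : MeasurableSpace Ω} {μ : Measure Ω} [IsFiniteMeasure μ]
  {A B C : Set Ω}

theorem setIntegral_inter_condExp_indicator_eq (hC : mC ≤ mΩ) (hA : MeasurableSet A)
    (hB : MeasurableSet B)
    (hAB : μ[(A ∩ B).indicator (fun _ => (1 : ℝ)) | mC] =ᵐ[μ]
      μ[A.indicator (fun _ => (1 : ℝ)) | mC] * μ[B.indicator (fun _ => (1 : ℝ)) | mC])
    (hCs : MeasurableSet[mC] C) :
    ∫ x in C ∩ B, μ[A.indicator (fun _ => (1 : ℝ)) | mC] x ∂μ =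
      ∫ x in C ∩ B, A.indicator (fun _ => (1 : ℝ)) x ∂μ := by
  set g := μ[A.indicator (fun _ => (1 : ℝ)) | mC]
  have hgB : g * B.indicator (fun _ => 1) = B.indicator g := by
    ext x; by_cases hx : x ∈ B <;> simp [hx]
  have hpull : μ[B.indicator g | mC] =ᵐ[μ] g * μ[B.indicator (fun _ => (1 : ℝ)) | mC] := by
    rw [← hgB]
    refine condExp_mul_of_stronglyMeasurable_left stronglyMeasurable_condExp ?_
      ((integrable_const 1).indicator hB)
    rw [hgB]; exact integrable_condExp.indicator hB
  calc ∫ x in C ∩ B, g x ∂μ = ∫ x in C, B.indicator g x ∂μ := (setIntegral_indicator hB).symm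
    _ = ∫ x in C, μ[B.indicator g | mC] x ∂μ :=
      (setIntegral_condExp hC (integrable_condExp.indicator hB) hCs).symm
    _ = ∫ x in C, μ[(A ∩ B).indicator (fun _ => (1 : ℝ)) | mC] x ∂μ :=
      setIntegral_congr_ae (hC _ hCs) ((hpull.trans hAB.symm).mono fun _ hx _ => hx)
    _ = ∫ x in C, (A ∩ B).indicator (fun _ => (1 : ℝ)) x ∂μ :=
      setIntegral_condExp hC ((integrable_const 1).indicator (hA.inter hB)) hCs
    _ = ∫ x in C ∩ B, A.indicator (fun _ => (1 : ℝ)) x ∂μ := by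
      rw [← setIntegral_indicator hB, indicator_indicator, inter_comm B]

theorem CondIndepC.condExp_indicator_sup_ae_eq (h : CondIndepC μ mA mB mC) (hB : mB ≤ mΩ)
    (hC : mC ≤ mΩ) (hA : MeasurableSet[mA] A) (hA' : MeasurableSet A) :
    μ[A.indicator (fun _ => (1 : ℝ)) | mC ⊔ mB] =ᵐ[μ] μ[A.indicator (fun _ => (1 : ℝ)) | mC] := by
  have hCB : mC ⊔ mB ≤ mΩ := sup_le hC hB
  have hsm : StronglyMeasurable[mC ⊔ mB] (μ[A.indicator (fun _ => (1 : ℝ)) | mC]) :=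
    stronglyMeasurable_condExp.mono le_sup_left
  refine (ae_eq_condExp_of_forall_setIntegral_eq hCB ((integrable_const (1 : ℝ)).indicator hA')
    (fun _ _ _ => integrable_condExp.integrableOn) (fun s hs _ => ?_)
    hsm.aestronglyMeasurable).symm
  refine setIntegral_eq_of_isPiSystem hCB (generateFrom_image2_inter mC mB).symm
    (isPiSystem_image2_inter (@isPiSystem_measurableSet Ω mC) (@isPiSystem_measurableSet Ω mB))
    ⟨univ, .univ, univ, .univ, inter_univ univ⟩ integrable_condExp
    ((integrable_const (1 : ℝ)).indicator hA') ?_ hs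
  rintro _ ⟨C, hCs, B, hBs, rfl⟩
  exact setIntegral_inter_condExp_indicator_eq hC hA' (hB _ hBs) (h A hA B hBs) hCs

end CondIndepC

theorem condExp_comp_comap {α β : Type*} {mα : MeasurableSpace α} {m mβ : MeasurableSpace β}
    {μ : Measure α} [IsFiniteMeasure μ] {φ : α → β} (hφ : Measurable φ) (hm : m ≤ mβ)
    {f : β → ℝ} (hf : Integrable f (μ.map φ)) :
    μ[f ∘ φ | m.comap φ] =ᵐ[μ] (μ.map φ)[f | m] ∘ φ := by
  have hce : AEStronglyMeasurable ((μ.map φ)[f | m]) (μ.map φ) :=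
    (stronglyMeasurable_condExp.mono hm).aestronglyMeasurable
  refine (ae_eq_condExp_of_forall_setIntegral_eq ((comap_mono hm).trans hφ.comap_le)
    ((integrable_map_measure hf.1 hφ.aemeasurable).mp hf)
    (fun _ _ _ => ((integrable_map_measure hce hφ.aemeasurable).mp integrable_condExp).integrableOn)
    ?_ (stronglyMeasurable_condExp.comp_measurable (comap_measurable φ)).aestronglyMeasurable).symm
  rintro _ ⟨s, hs, rfl⟩ -
  simp only [Function.comp_apply]
  rw [← setIntegral_map (hm s hs) hce hφ.aemeasurable,
    ← setIntegral_map (hm s hs) hf.1 hφ.aemeasurable, setIntegral_condExp hm hf hs]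

theorem pathSigma_comp {α β E : Type*} [MeasurableSpace E] {N : ℕ} (Y : Fin N → β → E)
    (φ : α → β) (t : Fin N) :
    pathSigma (fun i => Y i ∘ φ) t = (pathSigma Y t).comap φ := by
  simp only [pathSigma, comap_iSup, comap_comp]

theorem measurable_path_iSup {Ω E : Type*} [MeasurableSpace E] {N : ℕ}
    {ℱ : Fin N → MeasurableSpace Ω} {Y : Fin N → Ω → E} (hY : ∀ i, Measurable[ℱ i] (Y i)) :
    Measurable[⨆ i, ℱ i] fun ω i => Y i ω :=
  @measurable_pi_lambda _ _ _ (⨆ i, ℱ i) _ _ fun i => (hY i).mono (le_iSup ℱ i) le_rfl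

theorem pathSigma_le_iSup {Ω E : Type*} [MeasurableSpace E] {N : ℕ}
    {ℱ : Fin N → MeasurableSpace Ω} {Y : Fin N → Ω → E} (hY : ∀ i, Measurable[ℱ i] (Y i))
    (t : Fin N) : pathSigma Y t ≤ ⨆ i, ℱ i :=
  iSup₂_le fun i _ => (hY i).comap_le.trans (le_iSup ℱ i)

theorem stmt_10_general {Ω₁ Ω₂ E G : Type*} [m₁ : MeasurableSpace Ω₁] [m₂ : MeasurableSpace Ω₂]
    [MeasurableSpace E] [MeasurableSpace G] {N : ℕ}
    (ℱ : Fin N → MeasurableSpace Ω₁) (hFle : ∀ t, ℱ t ≤ m₁)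
    (𝒢 : Fin N → MeasurableSpace Ω₂) (hGle : ∀ t, 𝒢 t ≤ m₂)
    (P₁ : Measure Ω₁)
    (π : Measure (Ω₁ × Ω₂)) [IsProbabilityMeasure π]
    (hπ₁ : Measure.map Prod.fst π = P₁)
    (hcausal₁ : ∀ t : Fin N, CondIndepC π
      (⨆ s : Fin N, MeasurableSpace.comap Prod.fst (ℱ s))
      (MeasurableSpace.comap Prod.snd (𝒢 t)) (MeasurableSpace.comap Prod.fst (ℱ t)))
    (X : Fin N → Ω₁ → E) (W : Fin N → Ω₁ → G)
    (hX : ∀ t, Measurable[ℱ t] (X t)) (hW : ∀ t, Measurable[ℱ t] (W t))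
    (hsa : SelfAware P₁ ℱ (fun t ω => (X t ω, W t ω))) :
    SelfAware π
      (fun t => MeasurableSpace.comap Prod.fst (ℱ t) ⊔ MeasurableSpace.comap Prod.snd (𝒢 t))
      (fun t p => (X t p.1, W t p.1)) := by
  subst hπ₁
  intro t s hs
  set Y : Fin N → Ω₁ → E × G := fun i ω => (X i ω, W i ω)
  have hY : ∀ i, Measurable[ℱ i] (Y i) := fun i => (hX i).prodMk (hW i)
  set A := (fun ω i => Y i ω) ⁻¹' s
  have hA : MeasurableSet[⨆ i, ℱ i] A := measurable_path_iSup hY hs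
  have hA₁ : MeasurableSet A := iSup_le hFle A hA
  have hpath : pathSigma Y t ≤ m₁ := (pathSigma_le_iSup hY t).trans (iSup_le hFle)
  have hint : Integrable (A.indicator fun _ => (1 : ℝ)) (π.map Prod.fst) :=
    (integrable_const 1).indicator hA₁
  show π[A.indicator (fun _ => 1) ∘ Prod.fst | (ℱ t).comap Prod.fst ⊔ (𝒢 t).comap Prod.snd]
    =ᵐ[π] π[A.indicator (fun _ => 1) ∘ Prod.fst | pathSigma (fun i => Y i ∘ Prod.fst) t]
  rw [pathSigma_comp]
  calc π[A.indicator (fun _ => 1) ∘ Prod.fst | (ℱ t).comap Prod.fst ⊔ (𝒢 t).comap Prod.snd]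
      =ᵐ[π] π[A.indicator (fun _ => 1) ∘ Prod.fst | (ℱ t).comap Prod.fst] :=
        (hcausal₁ t).condExp_indicator_sup_ae_eq
          ((comap_mono (hGle t)).trans measurable_snd.comap_le)
          ((comap_mono (hFle t)).trans measurable_fst.comap_le)
          (by rw [← comap_iSup]; exact ⟨A, hA, rfl⟩) (hA₁.preimage measurable_fst)
    _ =ᵐ[π] (π.map Prod.fst)[A.indicator (fun _ => 1) | ℱ t] ∘ Prod.fst :=
        condExp_comp_comap measurable_fst (hFle t) hint
    _ =ᵐ[π] (π.map Prod.fst)[A.indicator (fun _ => 1) | pathSigma Y t] ∘ Prod.fst :=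
        ae_of_ae_map measurable_fst.aemeasurable (hsa t s hs)
    _ =ᵐ[π] π[A.indicator (fun _ => 1) ∘ Prod.fst | (pathSigma Y t).comap Prod.fst] :=
        (condExp_comp_comap measurable_fst hpath hint).symm

/-- Let `π` be a bicausal coupling of the filtered processes `𝕏` (on
`(Ω₁, ℱ, P₁)`, with path `X` and lift component `W`) and `𝕐` (on `(Ω₂, 𝒢, P₂)`), and let
`X̌ = (X, W)` be a self-aware lift of `𝕏`. Regarded as a process on the product space with
the product filtration under `π`, `X̌` is again self-aware. -/
theorem stmt_10 {Ω₁ Ω₂ E G : Type*} [m₁ : MeasurableSpace Ω₁] [m₂ : MeasurableSpace Ω₂]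
    [MeasurableSpace E] [MeasurableSpace G] {N : ℕ}
    (ℱ : Fin N → MeasurableSpace Ω₁) (hFmono : Monotone ℱ) (hFle : ∀ t, ℱ t ≤ m₁)
    (𝒢 : Fin N → MeasurableSpace Ω₂) (hGmono : Monotone 𝒢) (hGle : ∀ t, 𝒢 t ≤ m₂)
    (P₁ : Measure Ω₁) [IsProbabilityMeasure P₁] (P₂ : Measure Ω₂) [IsProbabilityMeasure P₂]
    (π : Measure (Ω₁ × Ω₂)) [IsProbabilityMeasure π]
    (hπ₁ : Measure.map Prod.fst π = P₁) (hπ₂ : Measure.map Prod.snd π = P₂)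
    (hcausal₁ : ∀ t : Fin N, CondIndepC π
      (⨆ s : Fin N, MeasurableSpace.comap Prod.fst (ℱ s))
      (MeasurableSpace.comap Prod.snd (𝒢 t)) (MeasurableSpace.comap Prod.fst (ℱ t)))
    (hcausal₂ : ∀ t : Fin N, CondIndepC π
      (⨆ s : Fin N, MeasurableSpace.comap Prod.snd (𝒢 s))
      (MeasurableSpace.comap Prod.fst (ℱ t)) (MeasurableSpace.comap Prod.snd (𝒢 t)))
    (X : Fin N → Ω₁ → E) (W : Fin N → Ω₁ → G)
    (hX : ∀ t, Measurable[ℱ t] (X t)) (hW : ∀ t, Measurable[ℱ t] (W t))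
    (hsa : SelfAware P₁ ℱ (fun t ω => (X t ω, W t ω))) :
    SelfAware π
      (fun t => MeasurableSpace.comap Prod.fst (ℱ t) ⊔ MeasurableSpace.comap Prod.snd (𝒢 t))
      (fun t p => (X t p.1, W t p.1)) :=
  stmt_10_general (m₁ := m₁) (m₂ := m₂) ℱ hFle 𝒢 hGle P₁ π hπ₁ hcausal₁ X W hX hW hsa
end

section
/- Let (Ω̇, 𝓕 ⊗ 𝓗, Q, (𝓕_t ⊗ 𝓗_t)) be an extension of the stochastic basis (Ω, 𝓕, P, (𝓕_t)) (in particular Q has Ω-marginal P, and for every t the σ-algebras 𝓕_N ⊗ trivial and 𝓕_t ⊗ 𝓗_t are conditionally Q-independent given 𝓕_t ⊗ trivial). If X̌ is a self-aware process on (Ω, 𝓕, P, (𝓕_t)), then its lift Ẋ̌(ω,ξ) = X̌(ω) is self-aware on the extension: L_Q(Ẋ̌ | 𝓕_t ⊗ 𝓗_t) = L_Q(Ẋ̌ | Ẋ̌_{1:t}) for all t. -/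
open MeasureTheory ProbabilityTheory

/-!
Fix a path event `S = {X̌ ∈ s}` and write `1_S` for its indicator. Its lift to `Ω × Ξ` is
measurable for the pulled-back terminal σ-algebra `ℱ_N ⊗ triv`, so by causality conditioning it on
`ℱ_t ⊗ 𝓗_t` is the same as conditioning it on `ℱ_t ⊗ triv`. Because `Q` has `Ω`-marginal `P`,
a conditional expectation under `Q` given a σ-algebra pulled back from `Ω` is the pull-back of the
corresponding conditional expectation under `P`. Hence `Q[1_S | ℱ_t ⊗ 𝓗_t]` is the lift of
`P[1_S | ℱ_t]`, which by self-awareness under `P` is `P[1_S | σ(X̌_{1:t})]`, and the lift of that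
is `Q[1_S | σ(Ẋ̌_{1:t})]`.
-/

section CondExpPullback

variable {α β E : Type*} {mα : MeasurableSpace α} {m mβ : MeasurableSpace β}
  [NormedAddCommGroup E] [NormedSpace ℝ E] [CompleteSpace E]

theorem condExp_comp_ae_eq_condExp_comap {μ : Measure α} [IsFiniteMeasure μ] {f : α → β}
    (hf : Measurable f) (hm : m ≤ mβ) {g : β → E}
    (hg : Integrable g (μ.map f)) :
    (μ.map f)[g|m] ∘ f =ᵐ[μ] μ[g ∘ f | m.comap f] := by
  have hmf : m.comap f ≤ mα := (MeasurableSpace.comap_mono hm).trans hf.comap_le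
  refine ae_eq_condExp_of_forall_setIntegral_eq hmf (hg.comp_measurable hf)
    (fun _ _ _ => (integrable_condExp.comp_measurable hf).integrableOn) ?_
    (stronglyMeasurable_condExp.comp_measurable
      (measurable_iff_comap_le.mpr le_rfl)).aestronglyMeasurable
  rintro _ ⟨S, hS, rfl⟩ -
  calc ∫ x in f ⁻¹' S, ((μ.map f)[g|m] ∘ f) x ∂μ
      = ∫ y in S, ((μ.map f)[g|m]) y ∂(μ.map f) :=
        (setIntegral_map (hm _ hS) integrable_condExp.aestronglyMeasurable hf.aemeasurable).symm
    _ = ∫ y in S, g y ∂(μ.map f) := setIntegral_condExp hm hg hS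
    _ = ∫ x in f ⁻¹' S, (g ∘ f) x ∂μ :=
        setIntegral_map (hm _ hS) hg.aestronglyMeasurable hf.aemeasurable

end CondExpPullback

theorem CondIndepC.condExp_indicator_ae_eq {Ω : Type*} {mA m₁ m₂ mΩ : MeasurableSpace Ω}
    {μ : Measure Ω} [IsFiniteMeasure μ]
    (hci : CondIndepC μ mA m₂ m₁) (h₁₂ : m₁ ≤ m₂) (h₂ : m₂ ≤ mΩ) {A : Set Ω}
    (hA : MeasurableSet[mA] A) (hAm : MeasurableSet A) :
    μ[A.indicator (fun _ => (1 : ℝ)) | m₂] =ᵐ[μ] μ[A.indicator (fun _ => (1 : ℝ)) | m₁] := by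
  set e : Ω → ℝ := μ[A.indicator (fun _ => (1 : ℝ)) | m₁]
  refine (ae_eq_condExp_of_forall_setIntegral_eq h₂ ((integrable_const _).indicator hAm)
    (fun _ _ _ => integrable_condExp.integrableOn) (fun B hB _ => ?_)
    (stronglyMeasurable_condExp.mono h₁₂).aestronglyMeasurable).symm
  have hBm : MeasurableSet B := h₂ _ hB
  have he_mul : e * B.indicator (fun _ => (1 : ℝ)) = B.indicator e := by
    funext x
    by_cases hx : x ∈ B <;> simp [hx]
  calc ∫ x in B, e x ∂μ
      = ∫ x, μ[e * B.indicator (fun _ => (1 : ℝ)) | m₁] x ∂μ := by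
        rw [integral_condExp (h₁₂.trans h₂), he_mul, integral_indicator hBm]
    _ = ∫ x, (e * μ[B.indicator (fun _ => (1 : ℝ)) | m₁]) x ∂μ := by
        refine integral_congr_ae (condExp_mul_of_stronglyMeasurable_left
          stronglyMeasurable_condExp ?_ ((integrable_const _).indicator hBm))
        rw [he_mul]
        exact integrable_condExp.indicator hBm
    _ = ∫ x, μ[(A ∩ B).indicator (fun _ => (1 : ℝ)) | m₁] x ∂μ :=
        (integral_congr_ae (hci A hA B hB)).symm
    _ = ∫ x in B, A.indicator (fun _ => (1 : ℝ)) x ∂μ := by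
        rw [integral_condExp (h₁₂.trans h₂), Set.inter_comm, ← Set.indicator_indicator,
          integral_indicator hBm]

section Paths

variable {Ω Ω' E : Type*} [MeasurableSpace E] {N : ℕ}

theorem pathSigma_comp_right (Y : Fin N → Ω → E) (f : Ω' → Ω) (t : Fin N) :
    pathSigma (fun i x => Y i (f x)) t = (pathSigma Y t).comap f := by
  simp_rw [pathSigma, MeasurableSpace.comap_iSup, MeasurableSpace.comap_comp]
  rfl

theorem measurableSet_path_preimage {ℱ : Fin N → MeasurableSpace Ω} {Y : Fin N → Ω → E}
    (hY : ∀ t, Measurable[ℱ t] (Y t)) {s : Set (Fin N → E)} (hs : MeasurableSet s) :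
    MeasurableSet[⨆ i, ℱ i] ((fun ω i => Y i ω) ⁻¹' s) := by
  have hpath : Measurable[⨆ i, ℱ i] (fun ω i => Y i ω) :=
    @measurable_pi_lambda Ω (Fin N) (fun _ => E) (⨆ i, ℱ i) _ _
      fun i => (hY i).mono (le_iSup ℱ i) le_rfl
  exact hpath hs

theorem pathSigma_le {ℱ : Fin N → MeasurableSpace Ω} (hℱ : Monotone ℱ) {Y : Fin N → Ω → E}
    (hY : ∀ t, Measurable[ℱ t] (Y t)) (t : Fin N) : pathSigma Y t ≤ ℱ t :=
  iSup_le fun i => iSup_le fun hi => (measurable_iff_comap_le.mp (hY i)).trans (hℱ hi)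

end Paths

theorem SelfAware.comp_of_condIndepC {Ω Ω' E : Type*} [mΩ : MeasurableSpace Ω]
    [mΩ' : MeasurableSpace Ω'] [MeasurableSpace E] {N : ℕ} {P : Measure Ω}
    {Q : Measure Ω'} [IsFiniteMeasure Q] {f : Ω' → Ω} (hf : Measurable f) (hQP : Q.map f = P)
    {ℱ : Fin N → MeasurableSpace Ω} (hℱ : Monotone ℱ) (hℱle : ∀ t, ℱ t ≤ mΩ)
    {𝒢 : Fin N → MeasurableSpace Ω'} (h𝒢le : ∀ t, 𝒢 t ≤ mΩ')
    (hℱ𝒢 : ∀ t, (ℱ t).comap f ≤ 𝒢 t)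
    (hci : ∀ t, CondIndepC Q (⨆ s, (ℱ s).comap f) (𝒢 t) ((ℱ t).comap f))
    {Y : Fin N → Ω → E} (hY : ∀ t, Measurable[ℱ t] (Y t)) (hsa : SelfAware P ℱ Y) :
    SelfAware Q 𝒢 (fun t x => Y t (f x)) := by
  subst hQP
  intro t s hs
  set S := (fun ω i => Y i ω) ⁻¹' s
  have hS : MeasurableSet[⨆ i, ℱ i] S := measurableSet_path_preimage hY hs
  have hSm : MeasurableSet S := iSup_le hℱle _ hS
  have hfS : MeasurableSet[⨆ i, (ℱ i).comap f] (f ⁻¹' S) := by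
    rw [← MeasurableSpace.comap_iSup]
    exact ⟨S, hS, rfl⟩
  have hint : Integrable (S.indicator fun _ => (1 : ℝ)) (Q.map f) :=
    (integrable_const _).indicator hSm
  change Q[S.indicator (fun _ => 1) ∘ f | 𝒢 t]
    =ᵐ[Q] Q[S.indicator (fun _ => 1) ∘ f | pathSigma (fun i x => Y i (f x)) t]
  rw [pathSigma_comp_right]
  calc Q[S.indicator (fun _ => 1) ∘ f | 𝒢 t]
      =ᵐ[Q] Q[S.indicator (fun _ => 1) ∘ f | (ℱ t).comap f] :=
        (hci t).condExp_indicator_ae_eq (hℱ𝒢 t) (h𝒢le t) hfS (hf hSm)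
    _ =ᵐ[Q] (Q.map f)[S.indicator (fun _ => 1) | ℱ t] ∘ f :=
        (condExp_comp_ae_eq_condExp_comap hf (hℱle t) hint).symm
    _ =ᵐ[Q] (Q.map f)[S.indicator (fun _ => 1) | pathSigma Y t] ∘ f :=
        (hsa t s hs).comp_tendsto (Measure.tendsto_ae_map hf.aemeasurable)
    _ =ᵐ[Q] Q[S.indicator (fun _ => 1) ∘ f | (pathSigma Y t).comap f] :=
        condExp_comp_ae_eq_condExp_comap hf ((pathSigma_le hℱ hY t).trans (hℱle t)) hint

theorem stmt_12_general {Ω Ξ F : Type*} [mΩ : MeasurableSpace Ω] [mΞ : MeasurableSpace Ξ]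
    [MeasurableSpace F] {N : ℕ}
    (P : Measure Ω)
    (ℱ : Fin N → MeasurableSpace Ω) (hFmono : Monotone ℱ) (hFle : ∀ t, ℱ t ≤ mΩ)
    (𝓗 : Fin N → MeasurableSpace Ξ) (hHle : ∀ t, 𝓗 t ≤ mΞ)
    (Q : Measure (Ω × Ξ)) [IsProbabilityMeasure Q]
    (hmarg : Measure.map Prod.fst Q = P)
    (hcausal : ∀ t : Fin N, CondIndepC Q
      (⨆ s : Fin N, MeasurableSpace.comap Prod.fst (ℱ s))
      (MeasurableSpace.comap Prod.fst (ℱ t) ⊔ MeasurableSpace.comap Prod.snd (𝓗 t))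
      (MeasurableSpace.comap Prod.fst (ℱ t)))
    (Xc : Fin N → Ω → F) (hXc : ∀ t, Measurable[ℱ t] (Xc t))
    (hsa : SelfAware P ℱ Xc) :
    SelfAware Q
      (fun t => MeasurableSpace.comap Prod.fst (ℱ t) ⊔ MeasurableSpace.comap Prod.snd (𝓗 t))
      (fun t p => Xc t p.1) :=
  hsa.comp_of_condIndepC measurable_fst hmarg hFmono hFle
    (fun t => sup_le ((MeasurableSpace.comap_mono (hFle t)).trans measurable_fst.comap_le)
      ((MeasurableSpace.comap_mono (hHle t)).trans measurable_snd.comap_le))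
    (fun _ => le_sup_left) hcausal hXc

/-- Let `(Ω × Ξ, ℱ ⊗ 𝓗, Q, (ℱ_t ⊗ 𝓗_t))` be an extension of the
stochastic basis `(Ω, ℱ, P, (ℱ_t))`: `Q` has `Ω`-marginal `P` and for every `t` the
σ-algebras `ℱ_N ⊗ triv` and `ℱ_t ⊗ 𝓗_t` are conditionally `Q`-independent given
`ℱ_t ⊗ triv`. If `Xc` is self-aware on `(Ω, ℱ, P, (ℱ_t))`, then its lift
`Ẋ̌(ω,ξ) = Xc(ω)` is self-aware on the extension. -/
theorem stmt_12 {Ω Ξ F : Type*} [mΩ : MeasurableSpace Ω] [mΞ : MeasurableSpace Ξ]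
    [MeasurableSpace F] {N : ℕ}
    (P : Measure Ω) [IsProbabilityMeasure P]
    (ℱ : Fin N → MeasurableSpace Ω) (hFmono : Monotone ℱ) (hFle : ∀ t, ℱ t ≤ mΩ)
    (𝓗 : Fin N → MeasurableSpace Ξ) (hHmono : Monotone 𝓗) (hHle : ∀ t, 𝓗 t ≤ mΞ)
    (Q : Measure (Ω × Ξ)) [IsProbabilityMeasure Q]
    (hmarg : Measure.map Prod.fst Q = P)
    (hcausal : ∀ t : Fin N, CondIndepC Q
      (⨆ s : Fin N, MeasurableSpace.comap Prod.fst (ℱ s))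
      (MeasurableSpace.comap Prod.fst (ℱ t) ⊔ MeasurableSpace.comap Prod.snd (𝓗 t))
      (MeasurableSpace.comap Prod.fst (ℱ t)))
    (Xc : Fin N → Ω → F) (hXc : ∀ t, Measurable[ℱ t] (Xc t))
    (hsa : SelfAware P ℱ Xc) :
    SelfAware Q
      (fun t => MeasurableSpace.comap Prod.fst (ℱ t) ⊔ MeasurableSpace.comap Prod.snd (𝓗 t))
      (fun t p => Xc t p.1) :=
  stmt_12_general (mΩ := mΩ) (mΞ := mΞ) P ℱ hFmono hFle 𝓗 hHle Q hmarg hcausal Xc hXc hsa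
end

section
/- For each n ≥ 1 let μ^n = (id, 1_{A_n})_* λ and μ = (id, 0)_* λ be probability measures on ℝ², where λ is Lebesgue measure on [0,1] and A_n ⊆ [0,1] has λ(A_n) = 1/n. Then for p ∈ [1,∞), 𝒲_p(μ, μ^n)^p = 1/n, and the unique optimal coupling is π^n = g^n_* λ with g^n(x) = ((x,0),(x,1_{A_n}(x))). -/
open MeasureTheory Filter
open scoped ENNReal

noncomputable section

/-- Cost `|x₁ - y₁|^p + |x₂ - y₂|^p` for points of `ℝ²` (the `p`-th power of the
`p`-norm distance). -/
def pCost2 (p : ℝ) (q : (ℝ × ℝ) × (ℝ × ℝ)) : ℝ≥0∞ :=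
  ENNReal.ofReal (|q.1.1 - q.2.1| ^ p + |q.1.2 - q.2.2| ^ p)

/-- Couplings of two measures on `ℝ²`. -/
def Cpl (μ ν : Measure (ℝ × ℝ)) : Set (Measure ((ℝ × ℝ) × (ℝ × ℝ))) :=
  {π | Measure.map Prod.fst π = μ ∧ Measure.map Prod.snd π = ν}

/-- `𝒲_p^p`: the `p`-th power of the `p`-Wasserstein distance on `𝒫(ℝ²)`. -/
def WpPow (p : ℝ) (μ ν : Measure (ℝ × ℝ)) : ℝ≥0∞ :=
  ⨅ π ∈ Cpl μ ν, ∫⁻ q, pCost2 p q ∂π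

-- auxiliary lemmas
lemma aux_base_integral (p : ℝ) (hp : 1 ≤ p) (n : ℕ) (A : Set ℝ)
    (hA : MeasurableSet A) (hAsub : A ⊆ Set.Icc 0 1) (hAvol : volume A = 1 / n) :
    ∫⁻ x in Set.Icc (0:ℝ) 1,
      ENNReal.ofReal (|A.indicator (fun _ => (1:ℝ)) x| ^ p) ∂volume = 1 / n := by
  have hp0 : p ≠ 0 := by positivity
  have hptw : (fun x => ENNReal.ofReal (|A.indicator (fun _ => (1:ℝ)) x| ^ p))
      = A.indicator (fun _ => (1 : ℝ≥0∞)) := by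
    funext x
    by_cases hx : x ∈ A
    · simp [Set.indicator_of_mem hx, Real.one_rpow]
    · simp [Set.indicator_of_notMem hx, Real.zero_rpow hp0]
  rw [hptw, lintegral_indicator hA]
  simp only [lintegral_const, one_mul]
  rw [Measure.restrict_restrict hA, Measure.restrict_apply MeasurableSet.univ]
  rw [Set.univ_inter, Set.inter_eq_self_of_subset_left hAsub, hAvol]

/-- Let `A ⊆ [0,1]` be measurable with `λ(A) = 1/n`, and let
`μ = (id,0)_* λ`, `μⁿ = (id, 1_A)_* λ` on `ℝ²`. Then `𝒲_p(μ, μⁿ)^p = 1/n`, and the unique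
optimal coupling is `πⁿ = g_* λ` with `g(x) = ((x,0), (x, 1_A(x)))`. -/
theorem stmt_15 (p : ℝ) (hp : 1 ≤ p) (n : ℕ) (hn : 1 ≤ n) (A : Set ℝ)
    (hA : MeasurableSet A) (hAsub : A ⊆ Set.Icc 0 1) (hAvol : volume A = 1 / n) :
    WpPow p (Measure.map (fun x => (x, (0 : ℝ))) (volume.restrict (Set.Icc 0 1)))
        (Measure.map (fun x => (x, A.indicator (fun _ => (1 : ℝ)) x))
          (volume.restrict (Set.Icc 0 1)))
      = 1 / n ∧
    Measure.map (fun x => ((x, (0 : ℝ)), (x, A.indicator (fun _ => (1 : ℝ)) x)))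
        (volume.restrict (Set.Icc 0 1)) ∈
      Cpl (Measure.map (fun x => (x, (0 : ℝ))) (volume.restrict (Set.Icc 0 1)))
        (Measure.map (fun x => (x, A.indicator (fun _ => (1 : ℝ)) x))
          (volume.restrict (Set.Icc 0 1))) ∧
    (∫⁻ q, pCost2 p q ∂(Measure.map
        (fun x => ((x, (0 : ℝ)), (x, A.indicator (fun _ => (1 : ℝ)) x)))
        (volume.restrict (Set.Icc 0 1)))) = 1 / n ∧
    ∀ π ∈ Cpl (Measure.map (fun x => (x, (0 : ℝ))) (volume.restrict (Set.Icc 0 1)))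
        (Measure.map (fun x => (x, A.indicator (fun _ => (1 : ℝ)) x))
          (volume.restrict (Set.Icc 0 1))),
      (∫⁻ q, pCost2 p q ∂π) = 1 / n →
      π = Measure.map (fun x => ((x, (0 : ℝ)), (x, A.indicator (fun _ => (1 : ℝ)) x)))
        (volume.restrict (Set.Icc 0 1)) := by
  have hp0 : p ≠ 0 := by positivity
  set ι : ℝ → ℝ := A.indicator (fun _ => (1:ℝ)) with hι
  have hιm : Measurable ι := measurable_const.indicator hA
  set lam0 : Measure ℝ := volume.restrict (Set.Icc 0 1) with hlam0
  have hf0 : Measurable (fun x : ℝ => (x, (0:ℝ))) := measurable_id.prodMk measurable_const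
  have hf1 : Measurable (fun x : ℝ => (x, ι x)) := measurable_id.prodMk hιm
  have hg : Measurable (fun x : ℝ => ((x, (0:ℝ)), (x, ι x))) := hf0.prodMk hf1
  set μ : Measure (ℝ × ℝ) := Measure.map (fun x => (x, (0:ℝ))) lam0 with hμ
  set ν : Measure (ℝ × ℝ) := Measure.map (fun x => (x, ι x)) lam0 with hν
  set πs : Measure ((ℝ × ℝ) × (ℝ × ℝ)) :=
    Measure.map (fun x => ((x, (0:ℝ)), (x, ι x))) lam0 with hπs
  have hrp : Measurable (fun t : ℝ => t ^ p) :=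
    (Real.continuous_rpow_const (by linarith : (0:ℝ) ≤ p)).measurable
  -- measurability of cost pieces
  have hc2m : Measurable (fun q : (ℝ × ℝ) × (ℝ × ℝ) =>
      ENNReal.ofReal (|q.1.2 - q.2.2| ^ p)) :=
    (hrp.comp (measurable_fst.snd.sub measurable_snd.snd).abs).ennreal_ofReal
  have hc1m : Measurable (fun q : (ℝ × ℝ) × (ℝ × ℝ) =>
      ENNReal.ofReal (|q.1.1 - q.2.1| ^ p)) :=
    (hrp.comp (measurable_fst.fst.sub measurable_snd.fst).abs).ennreal_ofReal
  have hcostm : Measurable (pCost2 p) := by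
    unfold pCost2
    exact ((hrp.comp (measurable_fst.fst.sub measurable_snd.fst).abs).add
      (hrp.comp (measurable_fst.snd.sub measurable_snd.snd).abs)).ennreal_ofReal
  -- πs is a coupling
  have hcpl : πs ∈ Cpl μ ν := by
    constructor
    · rw [hπs, Measure.map_map measurable_fst hg]; rfl
    · rw [hπs, Measure.map_map measurable_snd hg]; rfl
  -- base integral
  have hbase : ∫⁻ x in Set.Icc (0:ℝ) 1, ENNReal.ofReal (|ι x| ^ p) ∂volume = 1 / n :=
    aux_base_integral p hp n A hA hAsub hAvol
  -- the second-coordinate cost integral for any coupling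
  have hfy : Measurable (fun y : ℝ × ℝ => ENNReal.ofReal (|y.2| ^ p)) :=
    (hrp.comp measurable_snd.abs).ennreal_ofReal
  have hc2 : ∀ π ∈ Cpl μ ν,
      ∫⁻ q, ENNReal.ofReal (|q.1.2 - q.2.2| ^ p) ∂π = 1 / n := by
    rintro π ⟨hπ1, hπ2⟩
    have hae1 : ∀ᵐ q ∂π, q.1.2 = 0 := by
      rw [ae_iff]
      have hS : MeasurableSet {y : ℝ × ℝ | y.2 ≠ 0} :=
        ((measurableSet_singleton (0:ℝ)).preimage measurable_snd).compl
      have : {q : (ℝ × ℝ) × (ℝ × ℝ) | ¬ q.1.2 = 0}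
          = Prod.fst ⁻¹' {y : ℝ × ℝ | y.2 ≠ 0} := rfl
      rw [this, ← Measure.map_apply measurable_fst hS, hπ1, hμ,
        Measure.map_apply hf0 hS]
      simp
    have heq : (fun q : (ℝ × ℝ) × (ℝ × ℝ) => ENNReal.ofReal (|q.1.2 - q.2.2| ^ p))
        =ᵐ[π] fun q => ENNReal.ofReal (|q.2.2| ^ p) := by
      filter_upwards [hae1] with q h1
      rw [h1, zero_sub, abs_neg]
    rw [lintegral_congr_ae heq]
    have : ∫⁻ q, ENNReal.ofReal (|q.2.2| ^ p) ∂π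
        = ∫⁻ y, ENNReal.ofReal (|y.2| ^ p) ∂ν := by
      rw [← hπ2, lintegral_map hfy measurable_snd]
    rw [this, hν, lintegral_map hfy hf1]
    exact hbase
  -- cost of πs
  have hcost_πs : ∫⁻ q, pCost2 p q ∂πs = 1 / n := by
    rw [hπs, lintegral_map hcostm hg]
    have : (fun x => pCost2 p ((x, (0:ℝ)), (x, ι x)))
        = fun x => ENNReal.ofReal (|ι x| ^ p) := by
      funext x
      simp [pCost2, Real.zero_rpow hp0, zero_sub, abs_neg]
    rw [this]
    exact hbase
  have hfin : (1 : ℝ≥0∞) / n ≠ ⊤ := by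
    simp [ENNReal.div_eq_top]
    omega
  -- lower bound for all couplings
  have hlow : ∀ π ∈ Cpl μ ν, (1 : ℝ≥0∞) / n ≤ ∫⁻ q, pCost2 p q ∂π := by
    intro π hπ
    rw [← hc2 π hπ]
    refine lintegral_mono fun q => ?_
    unfold pCost2
    refine ENNReal.ofReal_le_ofReal ?_
    nlinarith [Real.rpow_nonneg (abs_nonneg (q.1.1 - q.2.1)) p]
  refine ⟨?_, hcpl, hcost_πs, ?_⟩
  · refine le_antisymm ?_ (le_iInf₂ hlow)
    calc WpPow p μ ν ≤ ∫⁻ q, pCost2 p q ∂πs := iInf₂_le πs hcpl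
      _ = 1 / n := hcost_πs
  · rintro π hπ hcost
    obtain ⟨hπ1, hπ2⟩ := hπ
    -- split cost
    have hsplit : ∫⁻ q, pCost2 p q ∂π
        = (∫⁻ q, ENNReal.ofReal (|q.1.1 - q.2.1| ^ p) ∂π)
          + ∫⁻ q, ENNReal.ofReal (|q.1.2 - q.2.2| ^ p) ∂π := by
      rw [← lintegral_add_left hc1m]
      refine lintegral_congr fun q => ?_
      unfold pCost2
      rw [ENNReal.ofReal_add (Real.rpow_nonneg (abs_nonneg _) p)
        (Real.rpow_nonneg (abs_nonneg _) p)]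
    have hI2 : ∫⁻ q, ENNReal.ofReal (|q.1.2 - q.2.2| ^ p) ∂π = 1 / n :=
      hc2 π ⟨hπ1, hπ2⟩
    have hI1 : ∫⁻ q, ENNReal.ofReal (|q.1.1 - q.2.1| ^ p) ∂π = 0 := by
      have h := hcost
      rw [hsplit, hI2] at h
      have h' : (∫⁻ q, ENNReal.ofReal (|q.1.1 - q.2.1| ^ p) ∂π) + 1 / (n:ℝ≥0∞)
          = 0 + 1 / n := by rw [h, zero_add]
      exact WithTop.add_right_cancel hfin h'
    -- a.e. facts
    have hae1 : ∀ᵐ q ∂π, q.1.2 = 0 := by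
      rw [ae_iff]
      have hS : MeasurableSet {y : ℝ × ℝ | y.2 ≠ 0} :=
        ((measurableSet_singleton (0:ℝ)).preimage measurable_snd).compl
      have : {q : (ℝ × ℝ) × (ℝ × ℝ) | ¬ q.1.2 = 0}
          = Prod.fst ⁻¹' {y : ℝ × ℝ | y.2 ≠ 0} := rfl
      rw [this, ← Measure.map_apply measurable_fst hS, hπ1, hμ,
        Measure.map_apply hf0 hS]
      simp
    have hae2 : ∀ᵐ q ∂π, q.2.2 = ι q.2.1 := by
      rw [ae_iff]
      have hS : MeasurableSet {y : ℝ × ℝ | y.2 ≠ ι y.1} := by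
        have : {y : ℝ × ℝ | y.2 ≠ ι y.1}
            = (fun y : ℝ × ℝ => y.2 - ι y.1) ⁻¹' ({0}ᶜ) := by
          ext y; simp [sub_eq_zero]
        rw [this]
        exact (measurableSet_singleton (0:ℝ)).compl.preimage
          (measurable_snd.sub (hιm.comp measurable_fst))
      have : {q : (ℝ × ℝ) × (ℝ × ℝ) | ¬ q.2.2 = ι q.2.1}
          = Prod.snd ⁻¹' {y : ℝ × ℝ | y.2 ≠ ι y.1} := rfl
      rw [this, ← Measure.map_apply measurable_snd hS, hπ2, hν,
        Measure.map_apply hf1 hS]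
      simp
    have hae3 : ∀ᵐ q ∂π, q.1.1 = q.2.1 := by
      have h0 := (lintegral_eq_zero_iff hc1m).mp hI1
      filter_upwards [h0] with q hq
      simp only [Pi.zero_apply, ENNReal.ofReal_eq_zero] at hq
      by_contra hne
      have habs : 0 < |q.1.1 - q.2.1| := abs_pos.mpr (sub_ne_zero.mpr hne)
      have := Real.rpow_pos_of_pos habs p
      linarith
    have hae : (id : (ℝ × ℝ) × (ℝ × ℝ) → (ℝ × ℝ) × (ℝ × ℝ))
        =ᵐ[π] fun q => ((q.1.1, (0:ℝ)), (q.1.1, ι q.1.1)) := by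
      filter_upwards [hae1, hae2, hae3] with q h1 h2 h3
      simp only [id_eq, Prod.ext_iff]
      refine ⟨⟨trivial, h1⟩, h3.symm, ?_⟩
      rw [h2, h3]
    have hk : Measurable (fun q : (ℝ × ℝ) × (ℝ × ℝ) => q.1.1) := measurable_fst.fst
    have hmapk : Measure.map (fun q : (ℝ × ℝ) × (ℝ × ℝ) => q.1.1) π = lam0 := by
      have : (fun q : (ℝ × ℝ) × (ℝ × ℝ) => q.1.1)
          = Prod.fst ∘ (Prod.fst : (ℝ × ℝ) × (ℝ × ℝ) → ℝ × ℝ) := rfl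
      rw [this, ← Measure.map_map measurable_fst measurable_fst, hπ1, hμ,
        Measure.map_map measurable_fst hf0]
      have h2 : (Prod.fst ∘ fun x : ℝ => (x, (0:ℝ))) = id := rfl
      rw [h2, Measure.map_id]
    calc π = Measure.map id π := (Measure.map_id).symm
      _ = Measure.map (fun q : (ℝ × ℝ) × (ℝ × ℝ) => ((q.1.1, (0:ℝ)), (q.1.1, ι q.1.1))) π :=
          Measure.map_congr hae
      _ = Measure.map (fun x => ((x, (0:ℝ)), (x, ι x)))
            (Measure.map (fun q : (ℝ × ℝ) × (ℝ × ℝ) => q.1.1) π) :=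
          (Measure.map_map hg hk).symm
      _ = Measure.map (fun x => ((x, (0:ℝ)), (x, ι x))) lam0 := by rw [hmapk]


end
end

section
/- There exist μ, μ^1, μ^2, … ∈ 𝒫_p(ℝ²) with 𝒲_p(μ^n, μ) → 0 such that there is no probability space carrying random variables X ~ μ and X^n ~ μ^n (n ≥ 1) with both E[|X^n − X|_p^p] = 𝒲_p(μ^n, μ)^p for all n and X^n → X almost surely. -/
/-!
Take `μ = (id, 0)_* λ` and `μⁿ = (id, 1_{Aₙ})_* λ` with `λ` Lebesgue measure on `[0, 1)`.
The vertical coupling costs `λ(Aₙ) → 0`, and any coupling costs at least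
`E|X₁ - X₁ⁿ|^p + λ(Aₙ)`, because the second coordinates contribute `E|X₂ⁿ|^p = λ(Aₙ)`
whatever the coupling. So an optimal coupling has `X₁ⁿ = X₁` a.s., hence `X₂ⁿ = 1_{Aₙ}(X₁)`,
and `Xⁿ → X` a.s. would force `1_{Aₙ}(X₁) → 0` a.s. If every point of `[0, 1)` lies in
infinitely many `Aₙ`, this is impossible.
-/

open MeasureTheory Filter
open scoped ENNReal

noncomputable section

open Set
open scoped Topology

def dyadicInterval (k j : ℕ) : Set ℝ := Ico (j / 2 ^ k) ((j + 1) / 2 ^ k)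

/-- The "typewriter" enumeration of dyadic intervals: writing `n + 1 = 2^k + j` with
`j < 2^k`, the `n`-th set is `dyadicInterval k j`. It plays the role of the paper's harmonic
arcs: the measures tend to `0`, yet every point of `[0, 1)` is covered infinitely often. -/
def typewriterSet (n : ℕ) : Set ℝ :=
  dyadicInterval (Nat.log 2 (n + 1)) (n + 1 - 2 ^ Nat.log 2 (n + 1))

section Dyadic

lemma volume_dyadicInterval (k j : ℕ) : volume (dyadicInterval k j) = 2⁻¹ ^ k := by
  rw [dyadicInterval, Real.volume_Ico, ← sub_div, add_sub_cancel_left, one_div,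
    ENNReal.ofReal_inv_of_pos (by positivity), ENNReal.ofReal_pow zero_le_two, ENNReal.inv_pow]
  norm_num

lemma dyadicInterval_subset_Ico {k j : ℕ} (hj : j < 2 ^ k) :
    dyadicInterval k j ⊆ Ico 0 1 := by
  refine Ico_subset_Ico (by positivity) ?_
  rw [div_le_one (by positivity)]
  exact_mod_cast hj

lemma mem_dyadicInterval_floor {x : ℝ} (hx : 0 ≤ x) (k : ℕ) :
    x ∈ dyadicInterval k ⌊x * 2 ^ k⌋₊ := by
  rw [dyadicInterval, mem_Ico, div_le_iff₀ (by positivity), lt_div_iff₀ (by positivity)]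
  exact ⟨Nat.floor_le (by positivity), Nat.lt_floor_add_one _⟩

lemma floor_mul_two_pow_lt {x : ℝ} (hx : x < 1) (k : ℕ) : ⌊x * 2 ^ k⌋₊ < 2 ^ k := by
  rw [Nat.floor_lt' (by positivity)]
  push_cast
  nlinarith [pow_pos (two_pos : (0 : ℝ) < 2) k]

lemma sub_two_pow_log_lt (n : ℕ) : n + 1 - 2 ^ Nat.log 2 (n + 1) < 2 ^ Nat.log 2 (n + 1) := by
  have := Nat.lt_pow_succ_log_self one_lt_two (n + 1)
  rw [pow_succ] at this
  omega

lemma typewriterSet_two_pow_add_sub_one {k j : ℕ} (hj : j < 2 ^ k) :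
    typewriterSet (2 ^ k + j - 1) = dyadicInterval k j := by
  have hn : 2 ^ k + j - 1 + 1 = 2 ^ k + j := by have := k.one_le_two_pow; omega
  have hlog : Nat.log 2 (2 ^ k + j) = k :=
    Nat.log_eq_of_pow_le_of_lt_pow (by omega) (by rw [pow_succ]; omega)
  rw [typewriterSet, hn, hlog, Nat.add_sub_cancel_left]

lemma measurableSet_typewriterSet (n : ℕ) : MeasurableSet (typewriterSet n) := measurableSet_Ico

lemma typewriterSet_subset_Ico (n : ℕ) : typewriterSet n ⊆ Ico 0 1 :=
  dyadicInterval_subset_Ico (sub_two_pow_log_lt n)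

lemma tendsto_volume_typewriterSet :
    Tendsto (fun n => volume (typewriterSet n)) atTop (𝓝 0) := by
  have hlog : Tendsto (fun n => Nat.log 2 (n + 1)) atTop atTop :=
    tendsto_atTop_atTop.mpr fun k => ⟨2 ^ k, fun n hn =>
      (Nat.le_log_iff_pow_le one_lt_two (by omega)).mpr (by omega)⟩
  simp only [typewriterSet, volume_dyadicInterval]
  exact (ENNReal.tendsto_pow_atTop_nhds_zero_of_lt_one (by norm_num)).comp hlog

lemma frequently_mem_typewriterSet {x : ℝ} (hx : x ∈ Ico (0 : ℝ) 1) :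
    ∃ᶠ n in atTop, x ∈ typewriterSet n := by
  refine frequently_atTop.mpr fun N => ⟨2 ^ N + ⌊x * 2 ^ N⌋₊ - 1, ?_, ?_⟩
  · have := N.lt_two_pow_self
    omega
  · rw [typewriterSet_two_pow_add_sub_one (floor_mul_two_pow_lt hx.2 N)]
    exact mem_dyadicInterval_floor hx.1 N

lemma not_tendsto_indicator_typewriterSet {x : ℝ} (hx : x ∈ Ico (0 : ℝ) 1) :
    ¬ Tendsto (fun n => (typewriterSet n).indicator (1 : ℝ → ℝ) x) atTop (𝓝 0) := fun h => by
  obtain ⟨n, hmem, hlt⟩ :=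
    ((frequently_mem_typewriterSet hx).and_eventually (h.eventually_lt_const one_pos)).exists
  simp [indicator_of_mem hmem] at hlt

end Dyadic

def graphMeasure (ν : Measure ℝ) (f : ℝ → ℝ) : Measure (ℝ × ℝ) := ν.map fun x => (x, f x)

section Graph

variable {ν : Measure ℝ} {f g : ℝ → ℝ} {p : ℝ}

lemma isProbabilityMeasure_graphMeasure [IsProbabilityMeasure ν] (hf : Measurable f) :
    IsProbabilityMeasure (graphMeasure ν f) :=
  Measure.isProbabilityMeasure_map (measurable_id.prodMk hf).aemeasurable

lemma ae_of_map_eq_graphMeasure {Ω : Type*} [MeasurableSpace Ω] {P : Measure Ω}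
    {Y : Ω → ℝ × ℝ} (hY : Measurable Y) (hf : Measurable f) (hlaw : P.map Y = graphMeasure ν f)
    {Q : ℝ × ℝ → Prop} (hQ : MeasurableSet {v | Q v}) (h : ∀ᵐ x ∂ν, Q (x, f x)) :
    ∀ᵐ ω ∂P, Q (Y ω) := by
  refine ae_of_ae_map hY.aemeasurable ?_
  rw [hlaw]
  exact (ae_map_iff (measurable_id.prodMk hf).aemeasurable hQ).mpr h

lemma wpPow_graphMeasure_le (hp : p ≠ 0) (hf : Measurable f) (hg : Measurable g) :
    WpPow p (graphMeasure ν g) (graphMeasure ν f) ≤ ∫⁻ x, ENNReal.ofReal (|g x - f x| ^ p) ∂ν := by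
  set G : ℝ → (ℝ × ℝ) × (ℝ × ℝ) := fun x => ((x, g x), (x, f x))
  have hG : Measurable G := (measurable_id.prodMk hg).prodMk (measurable_id.prodMk hf)
  have hcpl : ν.map G ∈ Cpl (graphMeasure ν g) (graphMeasure ν f) :=
    ⟨Measure.map_map measurable_fst hG, Measure.map_map measurable_snd hG⟩
  calc WpPow p (graphMeasure ν g) (graphMeasure ν f)
      ≤ ∫⁻ q, pCost2 p q ∂ν.map G := biInf_le _ hcpl
    _ ≤ ∫⁻ x, pCost2 p (G x) ∂ν := lintegral_map_le _ _
    _ = ∫⁻ x, ENNReal.ofReal (|g x - f x| ^ p) ∂ν := by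
      simp [G, pCost2, Real.zero_rpow hp]

lemma lintegral_pCost2_eq_add {Ω : Type*} [MeasurableSpace Ω] {P : Measure Ω}
    {X Y : Ω → ℝ × ℝ} (hX : Measurable X) (hY : Measurable Y) :
    ∫⁻ ω, pCost2 p (X ω, Y ω) ∂P = ∫⁻ ω, ENNReal.ofReal (|(X ω).1 - (Y ω).1| ^ p) ∂P
      + ∫⁻ ω, ENNReal.ofReal (|(X ω).2 - (Y ω).2| ^ p) ∂P := by
  rw [← lintegral_add_left (by fun_prop)]
  refine lintegral_congr fun ω => ?_
  exact ENNReal.ofReal_add (by positivity) (by positivity)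

lemma lintegral_ofReal_rpow_abs_indicator_one (hp : p ≠ 0) {A : Set ℝ} (hA : MeasurableSet A) :
    ∫⁻ x, ENNReal.ofReal (|A.indicator 1 x| ^ p) ∂ν = ν A := by
  rw [← lintegral_indicator_one hA]
  refine lintegral_congr fun x => ?_
  by_cases hx : x ∈ A <;> simp [hx, Real.zero_rpow hp]

lemma ae_fst_eq_of_lintegral_pCost2_le {Ω : Type*} [MeasurableSpace Ω] {P : Measure Ω}
    {X Y : Ω → ℝ × ℝ} (hf : Measurable f) (hX : Measurable X) (hY : Measurable Y)
    (hX₂ : ∀ᵐ ω ∂P, (X ω).2 = 0) (hlaw : P.map Y = graphMeasure ν f)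
    (hfin : ∫⁻ x, ENNReal.ofReal (|f x| ^ p) ∂ν ≠ ∞)
    (hle : ∫⁻ ω, pCost2 p (X ω, Y ω) ∂P ≤ ∫⁻ x, ENNReal.ofReal (|f x| ^ p) ∂ν) :
    ∀ᵐ ω ∂P, (X ω).1 = (Y ω).1 := by
  have hsnd : ∫⁻ ω, ENNReal.ofReal (|(X ω).2 - (Y ω).2| ^ p) ∂P
      = ∫⁻ x, ENNReal.ofReal (|f x| ^ p) ∂ν := by
    have hmeas : Measurable fun v : ℝ × ℝ => ENNReal.ofReal (|v.2| ^ p) := by fun_prop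
    calc ∫⁻ ω, ENNReal.ofReal (|(X ω).2 - (Y ω).2| ^ p) ∂P
        = ∫⁻ ω, ENNReal.ofReal (|(Y ω).2| ^ p) ∂P :=
          lintegral_congr_ae (hX₂.mono fun ω h => by simp [h])
      _ = ∫⁻ x, ENNReal.ofReal (|f x| ^ p) ∂ν := by
          rw [← lintegral_map hmeas hY, hlaw, graphMeasure, lintegral_map hmeas (by fun_prop)]
  rw [lintegral_pCost2_eq_add hX hY, hsnd] at hle
  have hfst : ∫⁻ ω, ENNReal.ofReal (|(X ω).1 - (Y ω).1| ^ p) ∂P = 0 :=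
    nonpos_iff_eq_zero.mp <| (ENNReal.add_le_add_iff_right hfin).mp (by simpa using hle)
  filter_upwards [(lintegral_eq_zero_iff (by fun_prop)).mp hfst] with ω hω
  have h0 : |(X ω).1 - (Y ω).1| ^ p = 0 := le_antisymm (by simpa using hω) (by positivity)
  rw [Real.rpow_eq_zero_iff_of_nonneg (abs_nonneg _), abs_eq_zero, sub_eq_zero] at h0
  exact h0.1

end Graph

/-- There exist probability measures `μ, μ¹, μ², … ∈ 𝒫_p(ℝ²)` with
`𝒲_p(μⁿ, μ) → 0` such that on no probability space can one find `X ~ μ` and `Xⁿ ~ μⁿ`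
with both `E[|Xⁿ − X|_p^p] = 𝒲_p(μⁿ, μ)^p` for all `n` and `Xⁿ → X` almost surely. -/
theorem stmt_16 (p : ℝ) (hp : 1 ≤ p) :
    ∃ (μ : Measure (ℝ × ℝ)) (μs : ℕ → Measure (ℝ × ℝ)),
      IsProbabilityMeasure μ ∧ (∀ n, IsProbabilityMeasure (μs n)) ∧
      Tendsto (fun n => WpPow p μ (μs n)) atTop (nhds 0) ∧
      ¬ ∃ (Ω : Type) (mΩ : MeasurableSpace Ω) (P : Measure Ω)
          (_ : IsProbabilityMeasure P) (X : Ω → ℝ × ℝ) (Xs : ℕ → Ω → ℝ × ℝ),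
          Measurable X ∧ (∀ n, Measurable (Xs n)) ∧
          Measure.map X P = μ ∧ (∀ n, Measure.map (Xs n) P = μs n) ∧
          (∀ n, (∫⁻ ω, pCost2 p (X ω, Xs n ω) ∂P) = WpPow p μ (μs n)) ∧
          (∀ᵐ ω ∂P, Tendsto (fun n => Xs n ω) atTop (nhds (X ω))) := by
  set ν := volume.restrict (Ico (0 : ℝ) 1)
  have : IsProbabilityMeasure ν := ⟨by simp [ν]⟩
  set f : ℕ → ℝ → ℝ := fun n => (typewriterSet n).indicator 1
  have hp0 : p ≠ 0 := by positivity
  have hf (n : ℕ) : Measurable (f n) := measurable_one.indicator (measurableSet_typewriterSet n)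
  have hcost (n : ℕ) : ∫⁻ x, ENNReal.ofReal (|f n x| ^ p) ∂ν = ν (typewriterSet n) :=
    lintegral_ofReal_rpow_abs_indicator_one hp0 (measurableSet_typewriterSet n)
  have hW (n : ℕ) : WpPow p (graphMeasure ν 0) (graphMeasure ν (f n)) ≤ ν (typewriterSet n) := by
    simpa [hcost] using wpPow_graphMeasure_le (ν := ν) (g := 0) hp0 (hf n) measurable_const
  refine ⟨graphMeasure ν 0, fun n => graphMeasure ν (f n),
    isProbabilityMeasure_graphMeasure measurable_const,
    fun n => isProbabilityMeasure_graphMeasure (hf n),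
    tendsto_of_tendsto_of_tendsto_of_le_of_le tendsto_const_nhds tendsto_volume_typewriterSet
      (fun _ => zero_le) fun n => (hW n).trans_eq
        (Measure.restrict_eq_self _ (typewriterSet_subset_Ico n)), ?_⟩
  rintro ⟨Ω, mΩ, P, hP, X, Xs, hX, hXs, hXlaw, hXslaw, hopt, hconv⟩
  have hX₁ : ∀ᵐ ω ∂P, (X ω).1 ∈ Ico (0 : ℝ) 1 :=
    ae_of_map_eq_graphMeasure hX measurable_const hXlaw (measurable_fst measurableSet_Ico)
      (ae_restrict_mem measurableSet_Ico)
  have hX₂ : ∀ᵐ ω ∂P, (X ω).2 = 0 :=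
    ae_of_map_eq_graphMeasure hX measurable_const hXlaw
      (measurable_snd (measurableSet_singleton 0)) (.of_forall fun _ => rfl)
  have hfst (n : ℕ) : ∀ᵐ ω ∂P, (X ω).1 = (Xs n ω).1 :=
    ae_fst_eq_of_lintegral_pCost2_le (hf n) hX (hXs n) hX₂ (hXslaw n)
      (hcost n ▸ measure_ne_top ν _) ((hopt n).trans_le ((hW n).trans (hcost n).ge))
  have hsnd (n : ℕ) : ∀ᵐ ω ∂P, (Xs n ω).2 = f n (Xs n ω).1 :=
    ae_of_map_eq_graphMeasure (hXs n) (hf n) (hXslaw n)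
      (measurableSet_eq_fun measurable_snd ((hf n).comp measurable_fst)) (.of_forall fun _ => rfl)
  obtain ⟨ω, hω₁, hω₂, hωlim, hωfst, hωsnd⟩ :=
    (hX₁.and <| hX₂.and <| hconv.and <| (ae_all_iff.mpr hfst).and (ae_all_iff.mpr hsnd)).exists
  refine not_tendsto_indicator_typewriterSet hω₁ ?_
  have hlim₂ := (continuous_snd.tendsto _).comp hωlim
  rw [hω₂] at hlim₂
  exact hlim₂.congr fun n => by simp [hωsnd n, ← hωfst n, f]

end
end
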